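/- Let a, b > 0 and let γ : [0,∞) → ℝ be continuously differentiable with γ(0) ∈ (−a, b). Define W(γ) as the asymmetric barrier Lyapunov function ((1−q(γ))/2) ln(a²/(a²−γ²)) + (q(γ)/2) ln(b²/(b²−γ²)). If along the trajectory d/dt W(γ(t)) ≤ 0 whenever γ(t) ∈ (−a,b), then γ(t) ∈ (−a, b) for all t ≥ 0. -/

import Mathlib

/-!
Let `T > 0` be the first time `γ` leaves `(-a, b)`, so `γ T = b` or `γ T = -a`; the reflection
`x ↦ -x` swaps the two cases. If `γ T = b`, then just before `T` the trajectory lies in `(0, b)`,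
where `W` is the smooth barrier `log (b² / (b² - x²)) / 2`. There `W ∘ γ` has nonpositive
derivative, so it is antitone and bounded near `T⁻`, whereas `W` tends to `+∞` at `b⁻`.
-/

open Real Set Filter Topology

theorem AntitoneOn.not_tendsto_atTop_nhdsLT {f : ℝ → ℝ} {l T : ℝ} (hl : l < T)
    (hf : AntitoneOn f (Ioo l T)) : ¬Tendsto f (𝓝[<] T) atTop := by
  intro htop
  obtain ⟨t₀, hlt₀, ht₀T⟩ := exists_between hl
  obtain ⟨t, ht, hbig⟩ :=
    (Eventually.and (Ioo_mem_nhdsLT ht₀T) (htop.eventually_gt_atTop (f t₀))).exists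
  exact (hbig.trans_le (hf ⟨hlt₀, ht₀T⟩ ⟨hlt₀.trans ht.1, ht.2⟩ ht.1.le)).false

theorem ne_of_deriv_comp_nonpos_of_tendsto_atTop {W γ : ℝ → ℝ} {c b T : ℝ} (hcb : c < b)
    (hW : DifferentiableOn ℝ W (Ioo c b)) (hWb : Tendsto W (𝓝[<] b) atTop)
    (hγ : Differentiable ℝ γ) (hγb : ∀ᶠ t in 𝓝[<] T, γ t < b)
    (hderiv : ∀ᶠ t in 𝓝[<] T, deriv (W ∘ γ) t ≤ 0) : γ T ≠ b := by
  intro hγT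
  have hlim : Tendsto γ (𝓝[<] T) (𝓝[<] b) :=
    tendsto_nhdsWithin_iff.2 ⟨hγT ▸ hγ.continuous.continuousAt.tendsto.mono_left
      nhdsWithin_le_nhds, hγb⟩
  have hnear := (hlim.eventually (Ioo_mem_nhdsLT hcb)).and hderiv
  obtain ⟨l, hlT, hsub⟩ := mem_nhdsLT_iff_exists_Ioo_subset.1 hnear
  have hdiff : DifferentiableOn ℝ (W ∘ γ) (Ioo l T) := fun t ht =>
    ((hW.differentiableAt (isOpen_Ioo.mem_nhds (hsub ht).1)).comp t
      (hγ t)).differentiableWithinAt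
  have hanti : AntitoneOn (W ∘ γ) (Ioo l T) := by
    refine antitoneOn_of_deriv_nonpos (convex_Ioo l T) hdiff.continuousOn ?_ ?_ <;>
      rw [interior_Ioo]
    · exact hdiff
    · exact fun t ht => (hsub ht).2
  exact hanti.not_tendsto_atTop_nhdsLT hlT (hWb.comp hlim)

theorem differentiableOn_log_barrier {b : ℝ} :
    DifferentiableOn ℝ (fun x => log (b ^ 2 / (b ^ 2 - x ^ 2))) (Ioo (-b) b) := by
  intro x hx
  have hpos : 0 < b ^ 2 - x ^ 2 := by nlinarith [hx.1, hx.2]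
  have hb : b ^ 2 ≠ 0 := by nlinarith [hx.1, hx.2]
  refine DifferentiableAt.differentiableWithinAt ?_
  fun_prop (disch := positivity)

theorem tendsto_log_barrier {b : ℝ} (hb : 0 < b) :
    Tendsto (fun x => log (b ^ 2 / (b ^ 2 - x ^ 2))) (𝓝[<] b) atTop := by
  have hgap : Tendsto (fun x => b ^ 2 - x ^ 2) (𝓝[<] b) (𝓝[>] 0) := by
    refine tendsto_nhdsWithin_iff.2 ⟨?_, ?_⟩
    · have h : Continuous fun x : ℝ => b ^ 2 - x ^ 2 := by fun_prop
      simpa using (h.tendsto b).mono_left nhdsWithin_le_nhds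
    · filter_upwards [Ioo_mem_nhdsLT hb] with x hx
      exact sub_pos.2 (pow_lt_pow_left₀ hx.2 hx.1.le two_ne_zero)
  simp_rw [div_eq_mul_inv]
  exact tendsto_log_atTop.comp ((tendsto_inv_nhdsGT_zero.comp hgap).const_mul_atTop (pow_pos hb 2))

theorem ne_of_deriv_comp_nonpos_of_eqOn_log_barrier {V γ : ℝ → ℝ} {b T : ℝ} (hb : 0 < b)
    (hV : EqOn V (fun x => log (b ^ 2 / (b ^ 2 - x ^ 2)) / 2) (Ioo 0 b))
    (hγ : Differentiable ℝ γ) (hγb : ∀ᶠ t in 𝓝[<] T, γ t < b)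
    (hderiv : ∀ᶠ t in 𝓝[<] T, deriv (V ∘ γ) t ≤ 0) : γ T ≠ b := by
  have hVdiff : DifferentiableOn ℝ V (Ioo 0 b) :=
    ((differentiableOn_log_barrier.mono (Ioo_subset_Ioo_left (by linarith))).div_const 2).congr
      hV
  have hVlim : Tendsto V (𝓝[<] b) atTop :=
    ((tendsto_log_barrier hb).atTop_div_const two_pos).congr' <|
      (eventuallyEq_of_mem (Ioo_mem_nhdsLT hb) hV).symm
  exact ne_of_deriv_comp_nonpos_of_tendsto_atTop hb hVdiff hVlim hγ hγb hderiv

theorem exists_pos_mem_frontier_of_notMem {γ : ℝ → ℝ} {U : Set ℝ} (hU : IsOpen U)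
    (hγ : Continuous γ) (h0 : γ 0 ∈ U) {t : ℝ} (ht : 0 ≤ t) (hout : γ t ∉ U) :
    ∃ T > 0, γ T ∈ frontier U ∧ ∀ s ∈ Ico 0 T, γ s ∈ U := by
  set E := Ici 0 ∩ γ ⁻¹' Uᶜ
  have hE : IsClosed E := isClosed_Ici.inter (hU.isClosed_compl.preimage hγ)
  have hbdd : BddBelow E := ⟨0, fun s hs => hs.1⟩
  obtain ⟨hT0, hTout⟩ : sInf E ∈ E := hE.csInf_mem ⟨t, ht, hout⟩ hbdd
  have hTpos : 0 < sInf E := hT0.lt_of_ne' fun h => hTout (h ▸ h0)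
  have hbefore : ∀ s ∈ Ico 0 (sInf E), γ s ∈ U := fun s hs =>
    not_not.1 fun hs' => (csInf_le hbdd ⟨hs.1, hs'⟩).not_gt hs.2
  refine ⟨sInf E, hTpos, ?_, hbefore⟩
  rw [hU.frontier_eq]
  have hleft : Tendsto γ (𝓝[<] sInf E) (𝓝 (γ (sInf E))) :=
    hγ.continuousAt.tendsto.mono_left nhdsWithin_le_nhds
  exact ⟨mem_closure_of_tendsto hleft (mem_of_superset (Ico_mem_nhdsLT hTpos) hbefore), hTout⟩

/-- Barrier-Lyapunov invariance: if the barrier function is nonincreasing along a C¹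
trajectory starting in (−a,b), the trajectory stays in (−a,b) for all t ≥ 0. -/
theorem barrier_invariance (a b : ℝ) (ha : 0 < a) (hb : 0 < b)
    (q : ℝ → ℝ) (hq : ∀ x, q x = if 0 < x then 1 else 0)
    (W : ℝ → ℝ)
    (hW : ∀ x, W x = (1 - q x) / 2 * Real.log (a ^ 2 / (a ^ 2 - x ^ 2))
        + q x / 2 * Real.log (b ^ 2 / (b ^ 2 - x ^ 2)))
    (γ : ℝ → ℝ) (hγ : ContDiff ℝ 1 γ)
    (h0 : γ 0 ∈ Set.Ioo (-a) b)
    (hdecr : ∀ t, 0 ≤ t → γ t ∈ Set.Ioo (-a) b → deriv (fun s => W (γ s)) t ≤ 0) :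
    ∀ t, 0 ≤ t → γ t ∈ Set.Ioo (-a) b := by
  have hWpos : EqOn W (fun x => log (b ^ 2 / (b ^ 2 - x ^ 2)) / 2) (Ioo 0 b) := fun x hx => by
    rw [hW, hq, if_pos hx.1]
    ring
  have hWneg : EqOn (fun x => W (-x)) (fun x => log (a ^ 2 / (a ^ 2 - x ^ 2)) / 2) (Ioo 0 a) :=
    fun x hx => by
      dsimp only
      rw [hW, hq, if_neg (by linarith [hx.1]), neg_sq]
      ring
  intro t ht
  by_contra hout
  obtain ⟨T, hT, hfr, hbefore⟩ :=
    exists_pos_mem_frontier_of_notMem isOpen_Ioo hγ.continuous h0 ht hout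
  have hnear : ∀ᶠ s in 𝓝[<] T, γ s ∈ Ioo (-a) b ∧ deriv (W ∘ γ) s ≤ 0 :=
    mem_of_superset (Ico_mem_nhdsLT hT) fun s hs => ⟨hbefore s hs, hdecr s hs.1 (hbefore s hs)⟩
  have hγ' := hγ.differentiable one_ne_zero
  rw [frontier_Ioo (by linarith)] at hfr
  rcases hfr with hTa | hTb
  · refine ne_of_deriv_comp_nonpos_of_eqOn_log_barrier ha hWneg hγ'.neg
      (hnear.mono fun s hs => ?_) (hnear.mono fun s hs => ?_) (by simp [hTa])
    · simpa [neg_lt] using hs.1.1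
    · simpa [Function.comp_def] using hs.2
  · exact ne_of_deriv_comp_nonpos_of_eqOn_log_barrier hb hWpos hγ'
      (hnear.mono fun _ hs => hs.1.2) (hnear.mono fun _ hs => hs.2) hTb
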